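/- Let φ_μ(w) = μ([w_min, w]) as above. For w, w' ∈ L with w < w', one has φ_μ(w) = φ_μ(w') if and only if w and w' are consecutive in L. -/

import Mathlib

open MeasureTheory Topology Filter Set

/-- The shift map on one-sided infinite words, erasing the first letter. -/
def shiftMap {A : Type*} (w : ℕ → A) : ℕ → A := fun n => w (n + 1)

/-- A shift space: a closed, shift-invariant subset of `A^ℕ`. -/
def IsShiftSpace {A : Type*} [TopologicalSpace A] (L : Set (ℕ → A)) : Prop :=
  IsClosed L ∧ ∀ w ∈ L, shiftMap w ∈ L

/-- The finite word `v` occurs in `w` at position `j`. -/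
def OccursAt {A : Type*} (w : ℕ → A) (j : ℕ) (v : List A) : Prop :=
  ∀ i : Fin v.length, w (j + i) = v.get i

/-- `v` is a factor (subblock) of the language of `L`. -/
def IsFactor {A : Type*} (L : Set (ℕ → A)) (v : List A) : Prop :=
  ∃ w ∈ L, ∃ j, OccursAt w j v

/-- The cylinder of `v` in `L`: words of `L` having `v` as a prefix. -/
def Cyl {A : Type*} (L : Set (ℕ → A)) (v : List A) : Set (ℕ → A) :=
  {w ∈ L | OccursAt w 0 v}

/-- Strict lexicographic order on infinite words. -/
def LexLt {A : Type*} [LinearOrder A] (w w' : ℕ → A) : Prop :=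
  ∃ n, (∀ i < n, w i = w' i) ∧ w n < w' n

/-- Lexicographic order (non-strict) on infinite words. -/
def LexLe {A : Type*} [LinearOrder A] (w w' : ℕ → A) : Prop := LexLt w w' ∨ w = w'

/-- The word interval `[w, w']` in `L` for the lexicographic order. -/
def wordInterval {A : Type*} [LinearOrder A] (L : Set (ℕ → A)) (w w' : ℕ → A) :
    Set (ℕ → A) := {z ∈ L | LexLe w z ∧ LexLe z w'}

/-- The length-`n` prefix of an infinite word, as a list. -/
def prefixWord {A : Type*} (w : ℕ → A) (n : ℕ) : List A := List.ofFn (fun i : Fin n => w i)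

/-- A factor is left special if it has at least two distinct left one-letter extensions. -/
def IsLeftSpecial {A : Type*} (L : Set (ℕ → A)) (v : List A) : Prop :=
  ∃ a b : A, a ≠ b ∧ IsFactor L (a :: v) ∧ IsFactor L (b :: v)

/-- A factor is right special if it has at least two distinct right one-letter extensions. -/
def IsRightSpecial {A : Type*} (L : Set (ℕ → A)) (v : List A) : Prop :=
  ∃ a b : A, a ≠ b ∧ IsFactor L (v ++ [a]) ∧ IsFactor L (v ++ [b])

/-- The set of infinite left special words: all prefixes are left special factors. -/
def SPset {A : Type*} (L : Set (ℕ → A)) : Set (ℕ → A) :=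
  {w | ∀ n : ℕ, IsLeftSpecial L (prefixWord w n)}

/-- The factor complexity `p_L(n)`: the number of distinct length-`n` factors of `L`. -/
noncomputable def complexity {A : Type*} (L : Set (ℕ → A)) (n : ℕ) : ℕ :=
  Nat.card {v : List A // v.length = n ∧ IsFactor L v}

/-- The number of left special factors of length `n`. -/
noncomputable def splCount {A : Type*} (L : Set (ℕ → A)) (n : ℕ) : ℕ :=
  Nat.card {v : List A // v.length = n ∧ IsFactor L v ∧ IsLeftSpecial L v}

/-- A minimal shift: a nonempty shift space with no nonempty proper subshift. -/
def IsMinimalShift {A : Type*} [TopologicalSpace A] (L : Set (ℕ → A)) : Prop :=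
  IsShiftSpace L ∧ L.Nonempty ∧
    ∀ L' ⊆ L, IsShiftSpace L' → L'.Nonempty → L' = L

/-- Aperiodicity: no periodic word in `L`. -/
def IsAperiodic {A : Type*} (L : Set (ℕ → A)) : Prop :=
  ∀ w ∈ L, ∀ k : ℕ, 0 < k → shiftMap^[k] w ≠ w

/-- The factor set of `L` is prolongable: every factor extends by a letter on both sides. -/
def Prolongable {A : Type*} (L : Set (ℕ → A)) : Prop :=
  ∀ v : List A, IsFactor L v →
    (∃ a : A, IsFactor L (a :: v)) ∧ (∃ b : A, IsFactor L (v ++ [b]))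

/-!
Measure the words strictly between `w` and `w'`: `[w_min, w'] \ [w_min, w]` is `(w, w']`. If
some `z ∈ L` lies strictly between them, a long enough prefix of `z` cuts out a cylinder inside
`(w, w')`, which has positive measure, so `φ_μ(w) < φ_μ(w')`. Otherwise `(w, w'] = {w'}`, which
is null.
-/

section Lex

variable {A : Type*} [LinearOrder A]

theorem lexLt_iff_toLex_lt {w w' : ℕ → A} : LexLt w w' ↔ toLex w < toLex w' := Iff.rfl

theorem lexLe_iff_toLex_le {w w' : ℕ → A} : LexLe w w' ↔ toLex w ≤ toLex w' := by
  rw [le_iff_lt_or_eq, toLex_inj]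
  exact Iff.rfl

theorem LexLt.of_eqOn_prefix_right {w z : ℕ → A} (h : LexLt w z) :
    ∃ N, ∀ y : ℕ → A, (∀ i < N, y i = z i) → LexLt w y := by
  obtain ⟨n, hn, hlt⟩ := h
  exact ⟨n + 1, fun y hy => ⟨n, fun i hi => (hn i hi).trans (hy i (by omega)).symm,
    (hy n n.lt_succ_self).symm ▸ hlt⟩⟩

theorem LexLt.of_eqOn_prefix_left {z w : ℕ → A} (h : LexLt z w) :
    ∃ N, ∀ y : ℕ → A, (∀ i < N, y i = z i) → LexLt y w := by
  obtain ⟨n, hn, hlt⟩ := h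
  exact ⟨n + 1, fun y hy => ⟨n, fun i hi => (hy i (by omega)).trans (hn i hi),
    (hy n n.lt_succ_self).symm ▸ hlt⟩⟩

end Lex

section Cylinder

variable {A : Type*}

theorem mem_cyl_prefixWord_self {L : Set (ℕ → A)} {z : ℕ → A} (hz : z ∈ L) (N : ℕ) :
    z ∈ Cyl L (prefixWord z N) :=
  ⟨hz, fun i => by rw [zero_add]; exact (List.get_ofFn (fun j : Fin N => z j) i).symm⟩

theorem eq_of_mem_cyl_prefixWord {L : Set (ℕ → A)} {z y : ℕ → A} {N : ℕ}
    (hy : y ∈ Cyl L (prefixWord z N)) : ∀ i < N, y i = z i := fun i hi => by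
  simpa [prefixWord] using hy.2 ⟨i, by simpa [prefixWord] using hi⟩

theorem measurableSet_cyl [MeasurableSpace A] [MeasurableSingletonClass A] {L : Set (ℕ → A)}
    (hL : MeasurableSet L) (v : List A) : MeasurableSet (Cyl L v) := by
  have h : Cyl L v = L ∩ ⋂ i : Fin v.length, (fun z : ℕ → A => z i) ⁻¹' {v.get i} := by
    ext z; simp [Cyl, OccursAt]
  rw [h]
  exact hL.inter (.iInter fun i => measurable_pi_apply _ (measurableSet_singleton _))

theorem exists_cyl_subset_of_lexLt_of_lexLt {L : Set (ℕ → A)} [LinearOrder A] {w z w' : ℕ → A}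
    (hz : z ∈ L) (hwz : LexLt w z) (hzw' : LexLt z w') :
    ∃ v, (Cyl L v).Nonempty ∧ ∀ y ∈ Cyl L v, LexLt w y ∧ LexLt y w' := by
  obtain ⟨N, hN⟩ := hwz.of_eqOn_prefix_right
  obtain ⟨N', hN'⟩ := hzw'.of_eqOn_prefix_left
  refine ⟨prefixWord z (max N N'), ⟨z, mem_cyl_prefixWord_self hz _⟩, fun y hy => ?_⟩
  have hagree := eq_of_mem_cyl_prefixWord hy
  exact ⟨hN y fun i hi => hagree i (lt_max_of_lt_left hi),
    hN' y fun i hi => hagree i (lt_max_of_lt_right hi)⟩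

end Cylinder

section WordInterval

variable {A : Type*} [LinearOrder A] {L : Set (ℕ → A)} {a w w' : ℕ → A}

theorem wordInterval_subset_wordInterval (h : LexLe w w') :
    wordInterval L a w ⊆ wordInterval L a w' := by
  rintro z ⟨hz, haz, hzw⟩
  rw [lexLe_iff_toLex_le] at h hzw
  exact ⟨hz, haz, lexLe_iff_toLex_le.2 (hzw.trans h)⟩

theorem mem_wordInterval_diff {y : ℕ → A} (hy : y ∈ L) (hay : LexLe a y) (hwy : LexLt w y)
    (hyw' : LexLt y w') : y ∈ wordInterval L a w' \ wordInterval L a w := by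
  rw [lexLt_iff_toLex_lt] at hwy hyw'
  refine ⟨⟨hy, hay, Or.inl hyw'⟩, fun ⟨_, _, hyw⟩ => ?_⟩
  exact (lexLe_iff_toLex_le.1 hyw).not_gt hwy

theorem wordInterval_diff_singleton_subset (hno : ¬ ∃ z ∈ L, LexLt w z ∧ LexLt z w') :
    wordInterval L a w' \ {w'} ⊆ wordInterval L a w := by
  rintro z ⟨⟨hz, haz, hzw'⟩, hne⟩
  refine ⟨hz, haz, lexLe_iff_toLex_le.2 (not_lt.1 fun hwz => hno ⟨z, hz, hwz, ?_⟩)⟩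
  exact hzw'.resolve_right hne

end WordInterval

theorem MeasureTheory.measure_eq_zero_of_subset_sdiff_of_measure_eq {α : Type*}
    [MeasurableSpace α] {μ : Measure α} [IsFiniteMeasure μ] {s t c : Set α} (hst : s ⊆ t)
    (hμ : μ s = μ t) (hc : MeasurableSet c) (hct : c ⊆ t \ s) : μ c = 0 := by
  have h : μ s + μ c ≤ μ s + 0 := calc
    μ s + μ c = μ (s ∪ c) :=
      (measure_union (disjoint_left.2 fun _ hx hxc => (hct hxc).2 hx) hc).symm
    _ ≤ μ t := measure_mono (union_subset hst fun _ hx => (hct hx).1)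
    _ = μ s + 0 := by rw [hμ, add_zero]
  exact nonpos_iff_eq_zero.1 (ENNReal.le_of_add_le_add_left (measure_ne_top μ s) h)

theorem phi_mu_noninjective_iff_consecutive_general
    {A : Type*} [Fintype A] [TopologicalSpace A] [DiscreteTopology A] [LinearOrder A]
    [MeasurableSpace A] [BorelSpace A]
    (L : Set (ℕ → A)) (hL : IsShiftSpace L)
    (μ : Measure (ℕ → A)) [IsProbabilityMeasure μ]
    (hsing : ∀ w : ℕ → A, μ {w} = 0)
    (hcyl : ∀ v : List A, (Cyl L v).Nonempty → 0 < μ (Cyl L v))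
    (wmin : ℕ → A) (hwmin' : ∀ w ∈ L, LexLe wmin w) :
    ∀ w ∈ L, ∀ w' ∈ L, LexLt w w' →
      (μ (wordInterval L wmin w) = μ (wordInterval L wmin w') ↔
        ¬ ∃ z ∈ L, LexLt w z ∧ LexLt z w') := by
  intro w _ w' _ hww'
  have hsub := wordInterval_subset_wordInterval (L := L) (a := wmin) (Or.inl hww')
  constructor
  · rintro heq ⟨z, hz, hwz, hzw'⟩
    obtain ⟨v, hne, hv⟩ := exists_cyl_subset_of_lexLt_of_lexLt hz hwz hzw'
    have hcyl_sub : Cyl L v ⊆ wordInterval L wmin w' \ wordInterval L wmin w := fun y hy =>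
      mem_wordInterval_diff hy.1 (hwmin' y hy.1) (hv y hy).1 (hv y hy).2
    exact (hcyl v hne).ne' (measure_eq_zero_of_subset_sdiff_of_measure_eq hsub heq
      (measurableSet_cyl hL.1.measurableSet v) hcyl_sub)
  · intro hno
    refine (measure_mono hsub).antisymm ?_
    calc μ (wordInterval L wmin w') = μ (wordInterval L wmin w' \ {w'}) :=
          (measure_sdiff_null (hsing w')).symm
      _ ≤ μ (wordInterval L wmin w) := measure_mono (wordInterval_diff_singleton_subset hno)

/-- `φ_μ(w) = φ_μ(w')` for `w < w'` in `L` iff `w` and `w'` are consecutive. -/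
theorem phi_mu_noninjective_iff_consecutive
    {A : Type*} [Fintype A] [TopologicalSpace A] [DiscreteTopology A] [LinearOrder A]
    [MeasurableSpace A] [BorelSpace A]
    (L : Set (ℕ → A)) (hL : IsShiftSpace L)
    (μ : Measure (ℕ → A)) [IsProbabilityMeasure μ] (hμL : μ L = 1)
    (hreg : μ.Regular)
    (hsing : ∀ w : ℕ → A, μ {w} = 0)
    (hcyl : ∀ v : List A, (Cyl L v).Nonempty → 0 < μ (Cyl L v))
    (wmin : ℕ → A) (hwmin : wmin ∈ L) (hwmin' : ∀ w ∈ L, LexLe wmin w) :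
    ∀ w ∈ L, ∀ w' ∈ L, LexLt w w' →
      (μ (wordInterval L wmin w) = μ (wordInterval L wmin w') ↔
        ¬ ∃ z ∈ L, LexLt w z ∧ LexLt z w') :=
  phi_mu_noninjective_iff_consecutive_general L hL μ hsing hcyl wmin hwmin'
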